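/- There exist normal form, reversible Turing machines Inc and Dec with alphabet {#, 0, 1} such that: on input a number n written on the tape in little-endian binary (with n > 1 in the case of Dec), the machine behaves properly and halts with output n + 1 (for Inc), respectively n − 1 (for Dec), written in little-endian binary; both machines run for O(log n) steps and use at most |n| + 2 tape cells. -/

import Mathlib

open scoped Classical

noncomputable section

/-- Head movement directions of a generalised Turing machine: Left, Right, or None. -/
inductive Dir3 : Type
  | L
  | R
  | N
deriving DecidableEq

instance instFintypeDir3 : Fintype Dir3 :=
  ⟨{Dir3.L, Dir3.R, Dir3.N}, fun x => by cases x <;> decide⟩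

/-- Displacement of the head. -/
def Dir3.move : Dir3 → ℤ
  | .L => -1
  | .R => 1
  | .N => 0

/-- A generalised deterministic Turing machine over tape alphabet `Γ` (with blank
symbol `blank`) and state set `Q`, with initial state `q0`, final state `qf`, and
total transition function `δ : Q × Γ → Γ × Q × {L, R, N}`. -/
structure GTM (Γ Q : Type) where
  blank : Γ
  q0 : Q
  qf : Q
  δ : Q → Γ → Γ × Q × Dir3

/-- A configuration: internal state, head position, and tape contents. -/
structure GCfg (Γ Q : Type) where
  state : Q
  head : ℤ
  tape : ℤ → Γ

/-- The global step function of a generalised TM. -/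
def GTM.step {Γ Q : Type} (M : GTM Γ Q) (c : GCfg Γ Q) : GCfg Γ Q :=
  let t := M.δ c.state (c.tape c.head)
  ⟨t.2.1, c.head + t.2.2.move, Function.update c.tape c.head t.1⟩

/-- A TM is reversible if every configuration has at most one predecessor,
i.e. the global step function is injective. -/
def GTM.Reversible {Γ Q : Type} (M : GTM Γ Q) : Prop :=
  Function.Injective M.step

/-- Normal form: `δ(q_f, σ) = (σ, q₀, N)` for every `σ`. -/
def GTM.NormalForm {Γ Q : Type} (M : GTM Γ Q) : Prop :=
  ∀ σ : Γ, M.δ M.qf σ = (σ, M.q0, Dir3.N)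

/-- The configuration after `t` steps, started in state `q0` with head in the starting
cell `0` on initial tape `tape0`. -/
def GTM.run {Γ Q : Type} (M : GTM Γ Q) (tape0 : ℤ → Γ) (t : ℕ) : GCfg Γ Q :=
  M.step^[t] ⟨M.q0, 0, tape0⟩

/-- `M`, started on `tape0`, behaves properly and halts at time exactly `t` with final
tape `tapeF`: at time `t` it is in the final state for the first time, with the head
back in the starting cell and tape contents `tapeF`, and the head never moved to the
left of the starting cell. -/
def GTM.ProperRun {Γ Q : Type} (M : GTM Γ Q) (tape0 : ℤ → Γ) (t : ℕ)
    (tapeF : ℤ → Γ) : Prop :=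
  (M.run tape0 t).state = M.qf ∧
  (M.run tape0 t).head = 0 ∧
  (M.run tape0 t).tape = tapeF ∧
  (∀ t' < t, (M.run tape0 t').state ≠ M.qf) ∧
  (∀ t' ≤ t, 0 ≤ (M.run tape0 t').head)

/-- `M` uses at most `s` tape cells on this run: the head stays within `[0, s)`. -/
def GTM.SpaceBound {Γ Q : Type} (M : GTM Γ Q) (tape0 : ℤ → Γ) (t : ℕ) (s : ℕ) : Prop :=
  ∀ t' ≤ t, (M.run tape0 t').head < (s : ℤ)

/-- The tape holding the little-endian binary expansion of `n` (no leading zeros,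
zero represented by the empty string), over the alphabet `{#, 0, 1}` modelled as
`Option Bool` with `none = #`. -/
def binTape (n : ℕ) : ℤ → Option Bool := fun i =>
  if 0 ≤ i ∧ i < ((Nat.digits 2 n).length : ℤ)
  then some ((Nat.digits 2 n).getD i.toNat 0 == 1)
  else none

/-- The number of binary digits `|n|` of `n`. -/
def binLen (n : ℕ) : ℕ := (Nat.digits 2 n).length


/-!
Write `n + 1 = 2 ^ k * (2 * c + 1)`. In little-endian binary `n` is `1^k 0 bits(c)` (just `1^k`
when `c = 0`) and `n + 1` is `0^k 1 bits(c)`, so `Inc` only rewrites a block of `k + 1` cells and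
`Dec` performs the opposite rewrite. For `k ≥ 1` the machine overwrites the starting cell with the
blank, a marker that lets it come back without ever moving left of the start; it sweeps right
flipping the run, rewrites the cell after it, looks one cell further (`Dec` must learn whether
`c = 0`, in which case that cell becomes blank instead of `0`), sweeps back to the marker and
restores it. This takes `2 k + 5` steps and visits only the cells `0, …, k + 1`, and `k` is at most
the length of the input. For `k = 0` a five-step detour through cell `1` suffices.

Reversibility is a finite check on the transition tables: the direction of a transition depends
only on its target state, and the target state together with the written symbol determines the
source state and the read symbol.
-/

open List (replicate)

namespace GTM

variable {Γ Q : Type} {M : GTM Γ Q}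

def Reaches (M : GTM Γ Q) (P : Q → ℤ → Prop) (c : GCfg Γ Q) (t : ℕ) (c' : GCfg Γ Q) :
    Prop :=
  M.step^[t] c = c' ∧ ∀ i < t, P (M.step^[i] c).state (M.step^[i] c).head

variable {P : Q → ℤ → Prop}

theorem Reaches.refl (c : GCfg Γ Q) : M.Reaches P c 0 c :=
  ⟨rfl, fun _ h => absurd h (Nat.not_lt_zero _)⟩

theorem Reaches.trans {c c' c'' : GCfg Γ Q} {a b : ℕ} (h : M.Reaches P c a c')
    (h' : M.Reaches P c' b c'') : M.Reaches P c (a + b) c'' := by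
  refine ⟨by rw [add_comm, Function.iterate_add_apply, h.1, h'.1], fun i hi => ?_⟩
  rcases lt_or_ge i a with hia | hia
  · exact h.2 i hia
  · obtain ⟨j, rfl⟩ := Nat.exists_eq_add_of_le hia
    rw [add_comm, Function.iterate_add_apply, h.1]
    exact h'.2 j (by omega)

theorem Reaches.of_eq {c c' : GCfg Γ Q} {t t' : ℕ} (h : M.Reaches P c t c') (ht : t = t') :
    M.Reaches P c t' c' := ht ▸ h

theorem reaches_one {c c' : GCfg Γ Q} (h : M.step c = c') (hP : P c.state c.head) :
    M.Reaches P c 1 c' :=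
  ⟨h, fun i hi => by rwa [Nat.lt_one_iff.mp hi]⟩

def Within (M : GTM Γ Q) (s : ℕ) (q : Q) (h : ℤ) : Prop := q ≠ M.qf ∧ 0 ≤ h ∧ h < s

theorem Reaches.properRun_spaceBound {T T' : ℤ → Γ} {t s : ℕ}
    (h : M.Reaches (M.Within s) ⟨M.q0, 0, T⟩ t ⟨M.qf, 0, T'⟩) (hs : 0 < s) :
    M.ProperRun T t T' ∧ M.SpaceBound T t s := by
  have hrun : M.run T t = ⟨M.qf, 0, T'⟩ := h.1
  have hwithin (i : ℕ) (hi : i ≤ t) : 0 ≤ (M.run T i).head ∧ (M.run T i).head < s := by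
    rcases hi.lt_or_eq with hi | rfl
    · exact (h.2 i hi).2
    · rw [hrun]; exact ⟨le_rfl, Int.natCast_pos.mpr hs⟩
  exact ⟨⟨by rw [hrun], by rw [hrun], by rw [hrun], fun i hi => (h.2 i hi).1,
    fun i hi => (hwithin i hi).1⟩, fun i hi => (hwithin i hi).2⟩

theorem reversible_of_injective
    (hdir : ∀ q₁ σ₁ q₂ σ₂, (M.δ q₁ σ₁).2.1 = (M.δ q₂ σ₂).2.1 →
      (M.δ q₁ σ₁).2.2 = (M.δ q₂ σ₂).2.2)
    (hinj : Function.Injective fun x : Q × Γ => ((M.δ x.1 x.2).1, (M.δ x.1 x.2).2.1)) :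
    M.Reversible := by
  rintro ⟨q₁, h₁, T₁⟩ ⟨q₂, h₂, T₂⟩ hc
  simp only [GTM.step, GCfg.mk.injEq] at hc
  obtain ⟨hq, hh, hT⟩ := hc
  obtain rfl : h₁ = h₂ := by rw [hdir _ _ _ _ hq] at hh; omega
  have hw := congrFun hT h₁
  simp only [Function.update_self] at hw
  obtain ⟨rfl, hσ⟩ := Prod.ext_iff.mp
    (@hinj (q₁, T₁ h₁) (q₂, T₂ h₁) (Prod.ext hw hq))
  simp only [GCfg.mk.injEq, true_and]
  funext x
  by_cases hx : x = h₁
  · exact hx ▸ hσ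
  · simpa [Function.update_of_ne hx] using congrFun hT x

end GTM

def listTape {α : Type} (l : List (Option α)) : ℤ → Option α
  | .ofNat i => l.getD i none
  | .negSucc _ => none

section ListTape

variable {α : Type}

theorem listTape_ext {l l' : List (Option α)} (h : ∀ i : ℕ, l.getD i none = l'.getD i none) :
    listTape l = listTape l' := by
  funext i
  rcases i with i | i
  exacts [h i, rfl]

theorem listTape_append_none (l : List (Option α)) : listTape (l ++ [none]) = listTape l := by
  refine listTape_ext fun i => ?_
  rcases lt_trichotomy i l.length with h | rfl | h
  · exact List.getD_append _ _ _ _ h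
  · simp
  · have h' : (l ++ [none]).length ≤ i := by simp; omega
    simp [List.getD_eq_getElem?_getD, List.getElem?_eq_none h', List.getElem?_eq_none h.le]

theorem listTape_append_cons_length (pre post : List (Option α)) (σ : Option α) :
    listTape (pre ++ σ :: post) pre.length = σ := by
  simp [listTape]

theorem update_listTape_append_cons (pre post : List (Option α)) (σ w : Option α) :
    Function.update (listTape (pre ++ σ :: post)) pre.length w = listTape (pre ++ w :: post) := by
  funext i
  rcases i with i | i
  · rw [Int.ofNat_eq_natCast]
    rcases eq_or_ne i pre.length with rfl | h
    · simp [listTape]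
    · rw [Function.update_of_ne (by omega)]
      simp only [listTape, List.getD_eq_getElem?_getD, List.getElem?_append, List.getElem?_cons]
      split_ifs <;> first | rfl | omega
  · exact Function.update_of_ne (by omega) _ _

end ListTape

namespace GTM

variable {α Q : Type} {M : GTM (Option α) Q} {P : Q → ℤ → Prop} {q q' : Q} {p p' : ℤ}

theorem reaches_write {l l' : List (Option α)} (pre : List (Option α)) (σ : Option α)
    (post : List (Option α)) (w : Option α) {d : Dir3} (hδ : M.δ q σ = (w, q', d))
    (hl : l = pre ++ σ :: post) (hl' : l' = pre ++ w :: post) (hp : p = pre.length)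
    (hp' : p' = p + d.move) (hP : P q p) :
    M.Reaches P ⟨q, p, listTape l⟩ 1 ⟨q', p', listTape l'⟩ := by
  refine reaches_one ?_ hP
  subst hl hl' hp hp'
  simp only [GTM.step, listTape_append_cons_length, hδ, update_listTape_append_cons]

theorem reaches_keep {T : ℤ → Option α} {d : Dir3} (hδ : M.δ q (T p) = (T p, q', d))
    (hp' : p' = p + d.move) (hP : P q p) :
    M.Reaches P ⟨q, p, T⟩ 1 ⟨q', p', T⟩ := by
  refine reaches_one ?_ hP
  subst hp'
  simp only [GTM.step, hδ, Function.update_eq_self]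

theorem reaches_sweep_right {a b : Option α} (hδ : M.δ q a = (b, q, .R))
    {pre post : List (Option α)} {k : ℕ} (hp : p = pre.length) (hp' : p' = p + k)
    (hP : ∀ i < k, P q (p + i)) :
    M.Reaches P ⟨q, p, listTape (pre ++ replicate k a ++ post)⟩ k
      ⟨q, p', listTape (pre ++ replicate k b ++ post)⟩ := by
  induction k generalizing pre p with
  | zero => simp only [hp', Nat.cast_zero, add_zero]; exact .refl _
  | succ k ih =>
    have first := reaches_write (P := P) (p' := p + 1) pre a (replicate k a ++ post) b hδ rfl rfl
      hp rfl (by simpa using hP 0 k.succ_pos)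
    have rest := ih (pre := pre ++ [b]) (p := p + 1) (by simp [hp]) (by rw [hp']; push_cast; ring)
      (fun i hi => by
        rw [show p + 1 + (i : ℤ) = p + ((i + 1 : ℕ) : ℤ) by push_cast; ring]
        exact hP _ (by omega))
    simp only [List.append_assoc, List.singleton_append] at rest
    simp only [List.replicate_succ, List.append_assoc, List.cons_append]
    exact (first.trans rest).of_eq (Nat.add_comm 1 k)

theorem reaches_sweep_left {a b : Option α} (hδ : M.δ q a = (b, q, .L))
    {pre post : List (Option α)} {k : ℕ} (hp' : p' + 1 = pre.length) (hp : p = p' + k)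
    (hP : ∀ i < k, P q (p' + 1 + i)) :
    M.Reaches P ⟨q, p, listTape (pre ++ replicate k a ++ post)⟩ k
      ⟨q, p', listTape (pre ++ replicate k b ++ post)⟩ := by
  induction k generalizing post p with
  | zero => simp only [hp, Nat.cast_zero, add_zero]; exact .refl _
  | succ k ih =>
    have first := reaches_write (P := P) (p := p) (p' := p' + k) (pre ++ replicate k a) a post b
      hδ rfl rfl (by simp; omega) (by simp [Dir3.move]; omega)
      (by rw [hp, show p' + ((k + 1 : ℕ) : ℤ) = p' + 1 + k by push_cast; ring]
          exact hP k (by omega))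
    have rest := ih (post := b :: post) (p := p' + k) rfl (fun i hi => hP i (by omega))
    simpa only [List.replicate_succ', List.append_assoc, List.singleton_append]
      using (first.trans rest).of_eq (Nat.add_comm 1 k)

theorem reaches_mark_sweep_right {q₀ : Q} {a b : Option α} {j : ℕ} {tl : List (Option α)}
    (hmark : M.δ q₀ a = (none, q, .R)) (hδ : M.δ q a = (b, q, .R)) (hP₀ : P q₀ 0)
    (hP : ∀ i < j, P q (1 + i)) :
    M.Reaches P ⟨q₀, 0, listTape (replicate (j + 1) a ++ tl)⟩ (j + 1)
      ⟨q, j + 1, listTape ([none] ++ replicate j b ++ tl)⟩ := by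
  have mark : M.Reaches P ⟨q₀, 0, listTape (replicate (j + 1) a ++ tl)⟩ 1
      ⟨q, 1, listTape ([none] ++ replicate j a ++ tl)⟩ :=
    reaches_write [] a (replicate j a ++ tl) none hmark (by simp [List.replicate_succ]) (by simp)
      rfl rfl hP₀
  exact (mark.trans (reaches_sweep_right hδ rfl (by ring) hP)).of_eq (add_comm 1 j)

theorem reaches_sweep_left_unmark {a : Option α} {j : ℕ} {tl : List (Option α)}
    (hδ : M.δ q a = (a, q, .L)) (hunmark : M.δ q none = (a, q', .R)) (hP : ∀ i ≤ j, P q i) :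
    M.Reaches P ⟨q, j, listTape ([none] ++ replicate j a ++ tl)⟩ (j + 1)
      ⟨q', 1, listTape (replicate (j + 1) a ++ tl)⟩ := by
  have sweep : M.Reaches P ⟨q, j, listTape ([none] ++ replicate j a ++ tl)⟩ j
      ⟨q, 0, listTape ([none] ++ replicate j a ++ tl)⟩ :=
    reaches_sweep_left hδ rfl (by ring) fun i hi => by simpa [add_comm] using hP (i + 1) (by omega)
  exact sweep.trans (reaches_write [] none (replicate j a ++ tl) a hunmark (by simp)
    (by simp [List.replicate_succ]) rfl rfl (hP 0 (Nat.zero_le _)))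

end GTM


namespace Nat

theorem bits_ne_nil {n : ℕ} (hn : n ≠ 0) : n.bits ≠ [] := by
  simpa [digits_two_eq_bits] using (digits_ne_nil_iff_ne_zero (b := 2)).mpr hn

theorem bits_two_pow_mul {m : ℕ} (hm : m ≠ 0) (k : ℕ) :
    (2 ^ k * m).bits = replicate k false ++ m.bits := by
  induction k with
  | zero => simp
  | succ k ih =>
    rw [pow_succ', mul_assoc, bit0_bits _ (by positivity), ih, List.replicate_succ,
      List.cons_append]

theorem bits_two_pow_mul_add_pred (m k : ℕ) :
    (2 ^ k * m + (2 ^ k - 1)).bits = replicate k true ++ m.bits := by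
  induction k with
  | zero => simp
  | succ k ih =>
    have : 2 ^ (k + 1) * m + (2 ^ (k + 1) - 1) = 2 * (2 ^ k * m + (2 ^ k - 1)) + 1 := by
      have := Nat.one_le_two_pow (n := k)
      rw [pow_succ', mul_assoc]
      omega
    rw [this, bit1_bits, ih, List.replicate_succ, List.cons_append]

theorem bits_two_pow_mul_odd (k c : ℕ) :
    (2 ^ k * (2 * c + 1)).bits = replicate k false ++ true :: c.bits := by
  rw [bits_two_pow_mul (by omega), bit1_bits]

theorem bits_two_pow_mul_odd_sub_one (k c : ℕ) :
    (2 ^ k * (2 * c + 1) - 1).bits = replicate k true ++ (2 * c).bits := by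
  have := Nat.one_le_two_pow (n := k)
  rw [show 2 ^ k * (2 * c + 1) - 1 = 2 ^ k * (2 * c) + (2 ^ k - 1) by rw [mul_succ]; omega,
    bits_two_pow_mul_add_pred]

theorem exists_eq_two_pow_mul_two_mul_add_one {n : ℕ} (hn : n ≠ 0) :
    ∃ k c, n = 2 ^ k * (2 * c + 1) := by
  obtain ⟨k, m, ⟨c, rfl⟩, h⟩ := exists_eq_two_pow_mul_odd hn
  exact ⟨k, c, h⟩

end Nat

theorem binTape_eq_listTape (n : ℕ) : binTape n = listTape (n.bits.map some) := by
  funext i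
  rcases i with i | i
  · simp only [binTape, Nat.digits_two_eq_bits, List.length_map, listTape, Int.ofNat_eq_natCast,
      Int.toNat_natCast, List.getD_eq_getElem?_getD, List.getElem?_map]
    by_cases hi : i < n.bits.length
    · rw [if_pos (by omega), List.getElem?_eq_getElem hi]
      cases n.bits[i] <;> rfl
    · rw [if_neg (by omega), List.getElem?_eq_none (by omega)]
      rfl
  · simp [binTape, listTape]

theorem binLen_eq_length_bits (n : ℕ) : binLen n = n.bits.length := by
  simp [binLen, Nat.digits_two_eq_bits]

theorem binLen_le_log (n : ℕ) : binLen n ≤ Nat.log 2 n + 1 := by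
  rcases eq_or_ne n 0 with rfl | hn
  · simp [binLen]
  · exact (Nat.length_digits 2 n one_lt_two hn).le

inductive IncState : Type
  | q0 | S0 | S1 | T | T' | B' | B | B0 | W | W' | P | qf
deriving DecidableEq

open IncState in
instance : Fintype IncState :=
  ⟨{q0, S0, S1, T, T', B', B, B0, W, W', P, qf}, fun x => by cases x <;> decide⟩

/- On binary numbers only some transitions are taken; the remaining entries of both tables are
chosen so that `GTM.reversible_of_injective` applies. -/
def incδ : IncState → Option Bool → Option Bool × IncState × Dir3
  | .q0, none         => (none,       .S0, .R)
  | .q0, some false   => (some false, .S0, .R)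
  | .q0, some true    => (none,       .S1, .R)
  | .S0, σ            => (σ,          .B0, .L)
  | .S1, some true    => (some false, .S1, .R)
  | .S1, some false   => (some true,  .T,  .R)
  | .S1, none         => (some true,  .T', .R)
  | .T, some false    => (some false, .B', .L)
  | .T, some true     => (some true,  .B', .L)
  | .T, none          => (some true,  .S0, .R)
  | .T', none         => (none,       .B', .L)
  | .T', some false   => (some true,  .S1, .R)
  | .T', some true    => (some false, .T,  .R)
  | .B', some true    => (some true,  .B,  .L)
  | .B', some false   => (none,       .T,  .R)
  | .B', none         => (some false, .T', .R)
  | .B, some false    => (some false, .B,  .L)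
  | .B, none          => (some false, .W,  .R)
  | .B, some true     => (none,       .T', .R)
  | .B0, none         => (some true,  .W', .R)
  | .B0, some false   => (some true,  .W,  .R)
  | .B0, some true    => (none,       .B,  .L)
  | .W, some false    => (some false, .P,  .L)
  | .W, some true     => (some true,  .P,  .L)
  | .W, none          => (none,       .W,  .R)
  | .W', none         => (none,       .P,  .L)
  | .W', some false   => (some false, .W', .R)
  | .W', some true    => (none,       .W', .R)
  | .P, σ             => (σ,          .qf, .N)
  | .qf, σ            => (σ,          .q0, .N)

def incMachine : GTM (Option Bool) IncState := ⟨none, .q0, .qf, incδ⟩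

theorem incMachine_reversible : incMachine.Reversible :=
  GTM.reversible_of_injective (by decide) (by decide)

theorem incMachine_normalForm : incMachine.NormalForm := fun _ => rfl

inductive DecState : Type
  | q0 | S0 | S1 | Tp | B1 | B2 | B | B0 | W | P | qf
deriving DecidableEq

open DecState in
instance : Fintype DecState :=
  ⟨{q0, S0, S1, Tp, B1, B2, B, B0, W, P, qf}, fun x => by cases x <;> decide⟩

def decδ : DecState → Option Bool → Option Bool × DecState × Dir3
  | .q0, some true    => (some true,  .S0, .R)
  | .q0, some false   => (none,       .S1, .R)
  | .q0, none         => (some false, .S0, .R)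
  | .S0, σ            => (σ,          .B0, .L)
  | .S1, some false   => (some true,  .S1, .R)
  | .S1, some true    => (some true,  .Tp, .R)
  | .S1, none         => (none,       .S0, .R)
  | .Tp, some false   => (some false, .B1, .L)
  | .Tp, some true    => (some true,  .B1, .L)
  | .Tp, none         => (none,       .B2, .L)
  | .B1, some true    => (some false, .B,  .L)
  | .B1, some false   => (none,       .Tp, .R)
  | .B1, none         => (none,       .B1, .L)
  | .B2, some true    => (none,       .B,  .L)
  | .B2, some false   => (some false, .B2, .L)
  | .B2, none         => (some true,  .B2, .L)
  | .B, some true     => (some true,  .B,  .L)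
  | .B, none          => (some true,  .W,  .R)
  | .B, some false    => (none,       .W,  .R)
  | .B0, some true    => (some false, .W,  .R)
  | .B0, some false   => (some false, .S1, .R)
  | .B0, none         => (some false, .Tp, .R)
  | .W, σ             => (σ,          .P,  .L)
  | .P, σ             => (σ,          .qf, .N)
  | .qf, σ            => (σ,          .q0, .N)

def decMachine : GTM (Option Bool) DecState := ⟨none, .q0, .qf, decδ⟩

theorem decMachine_reversible : decMachine.Reversible :=
  GTM.reversible_of_injective (by decide) (by decide)

theorem decMachine_normalForm : decMachine.NormalForm := fun _ => rfl

theorem decMachine_δ_S0 (σ : Option Bool) : decMachine.δ .S0 σ = (σ, .B0, .L) := by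
  rcases σ with _ | _ | _ <;> rfl

theorem decMachine_δ_W (σ : Option Bool) : decMachine.δ .W σ = (σ, .P, .L) := by
  rcases σ with _ | _ | _ <;> rfl

open GTM

section Inc

variable {s : ℕ}

theorem incMachine_reaches_turn (j c : ℕ) (hs : j + 3 ≤ s) :
    incMachine.Reaches (incMachine.Within s)
      ⟨.S1, j + 1, listTape ([none] ++ replicate j (some false) ++ (2 * c).bits.map some)⟩ 3
      ⟨.B, j,
        listTape ([none] ++ replicate j (some false) ++ some true :: c.bits.map some)⟩ := by
  set pre := [none] ++ replicate j (some false)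
  have hpre : (pre.length : ℤ) = j + 1 := by simp [pre]
  rcases eq_or_ne c 0 with rfl | hc
  · have carry : incMachine.Reaches (incMachine.Within s)
        ⟨.S1, j + 1, listTape (pre ++ [none] ++ [none])⟩ 1
        ⟨.T', j + 2, listTape (pre ++ [some true] ++ [none])⟩ :=
      reaches_write pre none [none] (some true) rfl (by simp) (by simp) (by omega)
        (by simp [Dir3.move]; ring) ⟨by decide, by omega, by omega⟩
    have peek : incMachine.Reaches (incMachine.Within s)
        ⟨.T', j + 2, listTape (pre ++ [some true] ++ [none])⟩ 1
        ⟨.B', j + 1, listTape (pre ++ [some true] ++ [none])⟩ :=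
      reaches_write (pre ++ [some true]) none [] none rfl (by simp) (by simp)
        (by simp [hpre]; ring) (by simp [Dir3.move]; ring) ⟨by decide, by omega, by omega⟩
    have turn : incMachine.Reaches (incMachine.Within s)
        ⟨.B', j + 1, listTape (pre ++ [some true] ++ [none])⟩ 1
        ⟨.B, j, listTape (pre ++ [some true] ++ [none])⟩ :=
      reaches_write pre (some true) [none] (some true) rfl (by simp) (by simp) (by omega)
        (by simp [Dir3.move]) ⟨by decide, by omega, by omega⟩
    simpa only [listTape_append_none, mul_zero, Nat.zero_bits, List.map_nil, List.append_nil]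
      using (carry.trans peek).trans turn
  · obtain ⟨b, bs, hb⟩ : ∃ b bs, c.bits = b :: bs :=
      List.exists_cons_of_ne_nil (Nat.bits_ne_nil hc)
    rw [Nat.bit0_bits c hc, hb]
    set tl := some b :: bs.map some
    have carry : incMachine.Reaches (incMachine.Within s)
        ⟨.S1, j + 1, listTape (pre ++ some false :: tl)⟩ 1
        ⟨.T, j + 2, listTape (pre ++ some true :: tl)⟩ :=
      reaches_write pre (some false) tl (some true) rfl rfl rfl (by omega)
        (by simp [Dir3.move]; ring) ⟨by decide, by omega, by omega⟩
    have peek : incMachine.Reaches (incMachine.Within s)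
        ⟨.T, j + 2, listTape (pre ++ some true :: tl)⟩ 1
        ⟨.B', j + 1, listTape (pre ++ some true :: tl)⟩ :=
      reaches_write (pre ++ [some true]) (some b) (bs.map some) (some b) (by cases b <;> rfl)
        (by simp [tl]) (by simp [tl]) (by simp [hpre]; ring) (by simp [Dir3.move]; ring)
        ⟨by decide, by omega, by omega⟩
    have turn : incMachine.Reaches (incMachine.Within s)
        ⟨.B', j + 1, listTape (pre ++ some true :: tl)⟩ 1
        ⟨.B, j, listTape (pre ++ some true :: tl)⟩ :=
      reaches_write pre (some true) tl (some true) rfl rfl rfl (by omega)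
        (by simp [Dir3.move]) ⟨by decide, by omega, by omega⟩
    simpa using (carry.trans peek).trans turn

theorem incMachine_reaches_return (j : ℕ) (tl : List (Option Bool)) (hs : j + 2 ≤ s) :
    incMachine.Reaches (incMachine.Within s)
      ⟨.B, j, listTape ([none] ++ replicate j (some false) ++ some true :: tl)⟩ (j + 3)
      ⟨.qf, 0, listTape (replicate (j + 1) (some false) ++ some true :: tl)⟩ := by
  have park : incMachine.Reaches (incMachine.Within s)
      ⟨.W, 1, listTape (replicate (j + 1) (some false) ++ some true :: tl)⟩ 1
      ⟨.P, 0, listTape (replicate (j + 1) (some false) ++ some true :: tl)⟩ :=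
    reaches_keep (by cases j <;> rfl) rfl ⟨by decide, by omega, by omega⟩
  have halt : incMachine.Reaches (incMachine.Within s)
      ⟨.P, 0, listTape (replicate (j + 1) (some false) ++ some true :: tl)⟩ 1
      ⟨.qf, 0, listTape (replicate (j + 1) (some false) ++ some true :: tl)⟩ :=
    reaches_keep rfl rfl ⟨by decide, le_rfl, by omega⟩
  exact ((reaches_sweep_left_unmark rfl rfl fun i hi => ⟨by decide, by omega, by omega⟩).trans
    park).trans halt

theorem incMachine_reaches_of_even (c : ℕ) (hs : 2 ≤ s) :
    incMachine.Reaches (incMachine.Within s) ⟨.q0, 0, binTape (2 * c)⟩ 5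
      ⟨.qf, 0, binTape (2 * c + 1)⟩ := by
  rcases eq_or_ne c 0 with rfl | hc
  · have h₀ : binTape (2 * 0) = listTape [none] := by
      rw [binTape_eq_listTape, ← listTape_append_none]; rfl
    have h₁ : binTape (2 * 0 + 1) = listTape [some true] := by
      rw [binTape_eq_listTape]; rfl
    rw [h₀, h₁]
    have start : incMachine.Reaches (incMachine.Within s)
        ⟨.q0, 0, listTape [none]⟩ 1 ⟨.S0, 1, listTape [none]⟩ :=
      reaches_keep rfl rfl ⟨by decide, le_rfl, by omega⟩
    have turn : incMachine.Reaches (incMachine.Within s)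
        ⟨.S0, 1, listTape [none]⟩ 1 ⟨.B0, 0, listTape [none]⟩ :=
      reaches_keep rfl rfl ⟨by decide, by omega, by omega⟩
    have write : incMachine.Reaches (incMachine.Within s)
        ⟨.B0, 0, listTape [none]⟩ 1 ⟨.W', 1, listTape [some true]⟩ :=
      reaches_write [] none [] (some true) rfl rfl rfl rfl rfl ⟨by decide, le_rfl, by omega⟩
    have park : incMachine.Reaches (incMachine.Within s)
        ⟨.W', 1, listTape [some true]⟩ 1 ⟨.P, 0, listTape [some true]⟩ :=
      reaches_keep rfl rfl ⟨by decide, by omega, by omega⟩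
    have halt : incMachine.Reaches (incMachine.Within s)
        ⟨.P, 0, listTape [some true]⟩ 1 ⟨.qf, 0, listTape [some true]⟩ :=
      reaches_keep rfl rfl ⟨by decide, le_rfl, by omega⟩
    exact (((start.trans turn).trans write).trans park).trans halt
  · obtain ⟨b, bs, hb⟩ : ∃ b bs, c.bits = b :: bs :=
      List.exists_cons_of_ne_nil (Nat.bits_ne_nil hc)
    rw [binTape_eq_listTape, binTape_eq_listTape, Nat.bit0_bits c hc, Nat.bit1_bits, hb]
    set tl := some b :: bs.map some
    have start : incMachine.Reaches (incMachine.Within s)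
        ⟨.q0, 0, listTape (some false :: tl)⟩ 1 ⟨.S0, 1, listTape (some false :: tl)⟩ :=
      reaches_keep rfl rfl ⟨by decide, le_rfl, by omega⟩
    have turn : incMachine.Reaches (incMachine.Within s)
        ⟨.S0, 1, listTape (some false :: tl)⟩ 1 ⟨.B0, 0, listTape (some false :: tl)⟩ :=
      reaches_keep rfl rfl ⟨by decide, by omega, by omega⟩
    have write : incMachine.Reaches (incMachine.Within s)
        ⟨.B0, 0, listTape (some false :: tl)⟩ 1 ⟨.W, 1, listTape (some true :: tl)⟩ :=
      reaches_write [] (some false) tl (some true) rfl rfl rfl rfl rfl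
        ⟨by decide, le_rfl, by omega⟩
    have park : incMachine.Reaches (incMachine.Within s)
        ⟨.W, 1, listTape (some true :: tl)⟩ 1 ⟨.P, 0, listTape (some true :: tl)⟩ :=
      reaches_keep (by cases b <;> rfl) rfl ⟨by decide, by omega, by omega⟩
    have halt : incMachine.Reaches (incMachine.Within s)
        ⟨.P, 0, listTape (some true :: tl)⟩ 1 ⟨.qf, 0, listTape (some true :: tl)⟩ :=
      reaches_keep rfl rfl ⟨by decide, le_rfl, by omega⟩
    simpa using (((start.trans turn).trans write).trans park).trans halt

theorem incMachine_reaches (k c : ℕ) (hs : k + 2 ≤ s) :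
    incMachine.Reaches (incMachine.Within s) ⟨.q0, 0, binTape (2 ^ k * (2 * c + 1) - 1)⟩
      (2 * k + 5) ⟨.qf, 0, binTape (2 ^ k * (2 * c + 1))⟩ := by
  rcases k with _ | j
  · simpa using incMachine_reaches_of_even c hs
  · rw [binTape_eq_listTape, binTape_eq_listTape, Nat.bits_two_pow_mul_odd_sub_one,
      Nat.bits_two_pow_mul_odd]
    simp only [List.map_append, List.map_replicate, List.map_cons]
    have carry : incMachine.Reaches (incMachine.Within s)
        ⟨.q0, 0, listTape (replicate (j + 1) (some true) ++ (2 * c).bits.map some)⟩ (j + 1)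
        ⟨.S1, j + 1, listTape ([none] ++ replicate j (some false) ++ (2 * c).bits.map some)⟩ :=
      reaches_mark_sweep_right rfl rfl ⟨by decide, le_rfl, by omega⟩
        fun i hi => ⟨by decide, by omega, by omega⟩
    exact ((carry.trans (incMachine_reaches_turn j c (by omega))).trans
      (incMachine_reaches_return j _ (by omega))).of_eq (by ring)

end Inc

section Dec

variable {s : ℕ}

theorem decMachine_reaches_turn (j c : ℕ) (hs : j + 3 ≤ s) :
    decMachine.Reaches (decMachine.Within s)
      ⟨.S1, j + 1,
        listTape ([none] ++ replicate j (some true) ++ some true :: c.bits.map some)⟩ 3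
      ⟨.B, j, listTape ([none] ++ replicate j (some true) ++ (2 * c).bits.map some)⟩ := by
  set pre := [none] ++ replicate j (some true)
  have hpre : (pre.length : ℤ) = j + 1 := by simp [pre]
  rcases eq_or_ne c 0 with rfl | hc
  · have pass : decMachine.Reaches (decMachine.Within s)
        ⟨.S1, j + 1, listTape (pre ++ [some true] ++ [none])⟩ 1
        ⟨.Tp, j + 2, listTape (pre ++ [some true] ++ [none])⟩ :=
      reaches_write pre (some true) [none] (some true) rfl (by simp) (by simp) (by omega)
        (by simp [Dir3.move]; ring) ⟨by decide, by omega, by omega⟩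
    have peek : decMachine.Reaches (decMachine.Within s)
        ⟨.Tp, j + 2, listTape (pre ++ [some true] ++ [none])⟩ 1
        ⟨.B2, j + 1, listTape (pre ++ [some true] ++ [none])⟩ :=
      reaches_write (pre ++ [some true]) none [] none rfl (by simp) (by simp)
        (by simp [hpre]; ring) (by simp [Dir3.move]; ring) ⟨by decide, by omega, by omega⟩
    have erase : decMachine.Reaches (decMachine.Within s)
        ⟨.B2, j + 1, listTape (pre ++ [some true] ++ [none])⟩ 1
        ⟨.B, j, listTape (pre ++ [none] ++ [none])⟩ :=
      reaches_write pre (some true) [none] none rfl (by simp) (by simp) (by omega)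
        (by simp [Dir3.move]) ⟨by decide, by omega, by omega⟩
    simpa only [listTape_append_none, mul_zero, Nat.zero_bits, List.map_nil, List.append_nil]
      using (pass.trans peek).trans erase
  · obtain ⟨b, bs, hb⟩ : ∃ b bs, c.bits = b :: bs :=
      List.exists_cons_of_ne_nil (Nat.bits_ne_nil hc)
    rw [Nat.bit0_bits c hc, hb]
    set tl := some b :: bs.map some
    have pass : decMachine.Reaches (decMachine.Within s)
        ⟨.S1, j + 1, listTape (pre ++ some true :: tl)⟩ 1
        ⟨.Tp, j + 2, listTape (pre ++ some true :: tl)⟩ :=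
      reaches_write pre (some true) tl (some true) rfl rfl rfl (by omega)
        (by simp [Dir3.move]; ring) ⟨by decide, by omega, by omega⟩
    have peek : decMachine.Reaches (decMachine.Within s)
        ⟨.Tp, j + 2, listTape (pre ++ some true :: tl)⟩ 1
        ⟨.B1, j + 1, listTape (pre ++ some true :: tl)⟩ :=
      reaches_write (pre ++ [some true]) (some b) (bs.map some) (some b) (by cases b <;> rfl)
        (by simp [tl]) (by simp [tl]) (by simp [hpre]; ring) (by simp [Dir3.move]; ring)
        ⟨by decide, by omega, by omega⟩
    have borrow : decMachine.Reaches (decMachine.Within s)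
        ⟨.B1, j + 1, listTape (pre ++ some true :: tl)⟩ 1
        ⟨.B, j, listTape (pre ++ some false :: tl)⟩ :=
      reaches_write pre (some true) tl (some false) rfl rfl rfl (by omega)
        (by simp [Dir3.move]) ⟨by decide, by omega, by omega⟩
    simpa using (pass.trans peek).trans borrow

theorem decMachine_reaches_return (j : ℕ) (tl : List (Option Bool)) (hs : j + 2 ≤ s) :
    decMachine.Reaches (decMachine.Within s)
      ⟨.B, j, listTape ([none] ++ replicate j (some true) ++ tl)⟩ (j + 3)
      ⟨.qf, 0, listTape (replicate (j + 1) (some true) ++ tl)⟩ := by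
  have park : decMachine.Reaches (decMachine.Within s)
      ⟨.W, 1, listTape (replicate (j + 1) (some true) ++ tl)⟩ 1
      ⟨.P, 0, listTape (replicate (j + 1) (some true) ++ tl)⟩ :=
    reaches_keep (decMachine_δ_W _) rfl ⟨by decide, by omega, by omega⟩
  have halt : decMachine.Reaches (decMachine.Within s)
      ⟨.P, 0, listTape (replicate (j + 1) (some true) ++ tl)⟩ 1
      ⟨.qf, 0, listTape (replicate (j + 1) (some true) ++ tl)⟩ :=
    reaches_keep rfl rfl ⟨by decide, le_rfl, by omega⟩
  exact ((reaches_sweep_left_unmark rfl rfl fun i hi => ⟨by decide, by omega, by omega⟩).trans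
    park).trans halt

theorem decMachine_reaches_of_odd {c : ℕ} (hc : c ≠ 0) (hs : 2 ≤ s) :
    decMachine.Reaches (decMachine.Within s) ⟨.q0, 0, binTape (2 * c + 1)⟩ 5
      ⟨.qf, 0, binTape (2 * c)⟩ := by
  rw [binTape_eq_listTape, binTape_eq_listTape, Nat.bit0_bits c hc, Nat.bit1_bits]
  set tl := c.bits.map some
  have start : decMachine.Reaches (decMachine.Within s)
      ⟨.q0, 0, listTape (some true :: tl)⟩ 1 ⟨.S0, 1, listTape (some true :: tl)⟩ :=
    reaches_keep rfl rfl ⟨by decide, le_rfl, by omega⟩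
  have turn : decMachine.Reaches (decMachine.Within s)
      ⟨.S0, 1, listTape (some true :: tl)⟩ 1 ⟨.B0, 0, listTape (some true :: tl)⟩ :=
    reaches_keep (decMachine_δ_S0 _) rfl ⟨by decide, by omega, by omega⟩
  have write : decMachine.Reaches (decMachine.Within s)
      ⟨.B0, 0, listTape (some true :: tl)⟩ 1 ⟨.W, 1, listTape (some false :: tl)⟩ :=
    reaches_write [] (some true) tl (some false) rfl rfl rfl rfl rfl
      ⟨by decide, le_rfl, by omega⟩
  have park : decMachine.Reaches (decMachine.Within s)
      ⟨.W, 1, listTape (some false :: tl)⟩ 1 ⟨.P, 0, listTape (some false :: tl)⟩ :=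
    reaches_keep (decMachine_δ_W _) rfl ⟨by decide, by omega, by omega⟩
  have halt : decMachine.Reaches (decMachine.Within s)
      ⟨.P, 0, listTape (some false :: tl)⟩ 1 ⟨.qf, 0, listTape (some false :: tl)⟩ :=
    reaches_keep rfl rfl ⟨by decide, le_rfl, by omega⟩
  simpa using (((start.trans turn).trans write).trans park).trans halt

theorem decMachine_reaches (k c : ℕ) (hn : 1 < 2 ^ k * (2 * c + 1)) (hs : k + 2 ≤ s) :
    decMachine.Reaches (decMachine.Within s) ⟨.q0, 0, binTape (2 ^ k * (2 * c + 1))⟩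
      (2 * k + 5) ⟨.qf, 0, binTape (2 ^ k * (2 * c + 1) - 1)⟩ := by
  rcases k with _ | j
  · simpa using decMachine_reaches_of_odd (c := c) (by simp at hn; omega) hs
  · rw [binTape_eq_listTape, binTape_eq_listTape, Nat.bits_two_pow_mul_odd_sub_one,
      Nat.bits_two_pow_mul_odd]
    simp only [List.map_append, List.map_replicate, List.map_cons]
    have borrow : decMachine.Reaches (decMachine.Within s)
        ⟨.q0, 0, listTape (replicate (j + 1) (some false) ++ some true :: c.bits.map some)⟩
        (j + 1)
        ⟨.S1, j + 1,
          listTape ([none] ++ replicate j (some true) ++ some true :: c.bits.map some)⟩ :=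
      reaches_mark_sweep_right rfl rfl ⟨by decide, le_rfl, by omega⟩
        fun i hi => ⟨by decide, by omega, by omega⟩
    exact ((borrow.trans (decMachine_reaches_turn j c (by omega))).trans
      (decMachine_reaches_return j _ (by omega))).of_eq (by ring)

end Dec

theorem incMachine_properRun (n : ℕ) : ∃ t ≤ 2 * binLen n + 5,
    incMachine.ProperRun (binTape n) t (binTape (n + 1)) ∧
      incMachine.SpaceBound (binTape n) t (binLen n + 2) := by
  obtain ⟨k, c, hkc⟩ := Nat.exists_eq_two_pow_mul_two_mul_add_one (n := n + 1) (by omega)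
  obtain rfl : n = 2 ^ k * (2 * c + 1) - 1 := by omega
  have hk : k ≤ binLen (2 ^ k * (2 * c + 1) - 1) := by
    simp [binLen_eq_length_bits, Nat.bits_two_pow_mul_odd_sub_one]
  refine ⟨2 * k + 5, by omega, ?_⟩
  rw [hkc]
  exact (incMachine_reaches k c (by omega)).properRun_spaceBound (by omega)

theorem decMachine_properRun {n : ℕ} (hn : 1 < n) : ∃ t ≤ 2 * binLen n + 5,
    decMachine.ProperRun (binTape n) t (binTape (n - 1)) ∧
      decMachine.SpaceBound (binTape n) t (binLen n + 2) := by
  obtain ⟨k, c, rfl⟩ := Nat.exists_eq_two_pow_mul_two_mul_add_one (n := n) (by omega)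
  have hk : k + 1 ≤ binLen (2 ^ k * (2 * c + 1)) := by
    simp [binLen_eq_length_bits, Nat.bits_two_pow_mul_odd]
  exact ⟨2 * k + 5, by omega,
    (decMachine_reaches k c hn (by omega)).properRun_spaceBound (by omega)⟩

/-- **Increment and decrement machines** (Lemma `incrementer`).  There are normal
form, reversible Turing machines `Inc` and `Dec` with alphabet `{#, 0, 1}` which, on
input a little-endian binary number `n` (with `n > 1` for `Dec`), behave properly and
halt with output `n + 1`, respectively `n − 1`, in little-endian binary; both run for
`O(log n)` steps and use at most `|n| + 2` tape cells. -/
theorem inc_dec_machines :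
    ∃ (QI : Type) (_ : Fintype QI) (Inc : GTM (Option Bool) QI)
      (QD : Type) (_ : Fintype QD) (Dec : GTM (Option Bool) QD) (C : ℕ),
      Inc.blank = none ∧ Dec.blank = none ∧
      Inc.Reversible ∧ Inc.NormalForm ∧
      Dec.Reversible ∧ Dec.NormalForm ∧
      (∀ n : ℕ, ∃ t : ℕ,
        t ≤ C * (Nat.log 2 n + 2) ∧
        Inc.ProperRun (binTape n) t (binTape (n + 1)) ∧
        Inc.SpaceBound (binTape n) t (binLen n + 2)) ∧
      (∀ n : ℕ, 1 < n → ∃ t : ℕ,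
        t ≤ C * (Nat.log 2 n + 2) ∧
        Dec.ProperRun (binTape n) t (binTape (n - 1)) ∧
        Dec.SpaceBound (binTape n) t (binLen n + 2)) := by
  refine ⟨IncState, inferInstance, incMachine, DecState, inferInstance, decMachine, 7, rfl, rfl,
    incMachine_reversible, incMachine_normalForm, decMachine_reversible, decMachine_normalForm,
    fun n => ?_, fun n hn => ?_⟩
  · obtain ⟨t, ht, hrun⟩ := incMachine_properRun n
    exact ⟨t, by linarith [binLen_le_log n], hrun⟩
  · obtain ⟨t, ht, hrun⟩ := decMachine_properRun hn
    exact ⟨t, by linarith [binLen_le_log n], hrun⟩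

end
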